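/- arXiv:2410.03693 — 3 statements merged into one kernel-verified Lean document; each statement's English description precedes it below -/
import Mathlib

section
/- Let m ≥ 1, let b_1, ..., b_m > 0 be distinct and a_1, ..., a_m ∈ ℝ all nonzero. Then limsup_{z → ∞} |∑_{k=1}^m a_k e^{i b_k z}| > 0. -/
/-!
If `f(z) = ∑ₖ cₖ e^{i bₖ z}` tends to `0` at infinity, so does the difference
`f(z + h) - e^{i b₀ h} f(z)`, which is an exponential sum with one frequency fewer and
coefficients `cₖ (e^{i bₖ h} - e^{i b₀ h})`. For small `h ≠ 0` these factors are nonzero,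
so by induction on the number of frequencies all `cₖ` but `c₀` vanish, and then
`|f| = |c₀|` is constant, forcing `c₀ = 0`. Finally, a nonnegative bounded function with
limsup `≤ 0` tends to `0`.
-/

open Filter Topology Complex

theorem exp_mul_I_ne_one {x : ℝ} (hx₀ : x ≠ 0) (hx : |x| < 2 * Real.pi) :
    exp (x * I) ≠ 1 := by
  intro h
  have hcos : Real.cos x = 1 := by rw [← exp_ofReal_mul_I_re, h, one_re]
  rw [abs_lt] at hx
  exact hx₀ ((Real.cos_eq_one_iff_of_lt_of_lt hx.1 hx.2).1 hcos)

theorem eventually_exp_I_mul_ne_one {d : ℝ} (hd : d ≠ 0) :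
    ∀ᶠ h : ℝ in 𝓝[≠] 0, exp (I * d * h) ≠ 1 := by
  have hsmall : ∀ᶠ h : ℝ in 𝓝 0, |d * h| < 2 * Real.pi := by
    have : Tendsto (fun h : ℝ => |d * h|) (𝓝 0) (𝓝 0) := by
      simpa using (continuous_const.mul continuous_id).abs.tendsto (0 : ℝ)
    exact this.eventually (gt_mem_nhds Real.two_pi_pos)
  filter_upwards [nhdsWithin_le_nhds hsmall, self_mem_nhdsWithin] with h hh hne
  convert exp_mul_I_ne_one (mul_ne_zero hd hne) hh using 2
  push_cast
  ring

theorem exists_exp_I_mul_ne {ι : Type*} (s : Finset ι) (b : ι → ℝ) (b₀ : ℝ)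
    (hb : ∀ k ∈ s, b k ≠ b₀) :
    ∃ h : ℝ, ∀ k ∈ s, exp (I * b k * h) ≠ exp (I * b₀ * h) := by
  have : ∀ᶠ h : ℝ in 𝓝[≠] 0, ∀ k ∈ s, exp (I * b k * h) ≠ exp (I * b₀ * h) := by
    refine (eventually_all_finset s).2 fun k hk => ?_
    filter_upwards [eventually_exp_I_mul_ne_one (sub_ne_zero.2 (hb k hk))] with h hh
    contrapose! hh
    rw [ofReal_sub, mul_sub, sub_mul, exp_sub, hh, div_self (exp_ne_zero _)]
  exact this.exists

noncomputable def expSum {ι : Type*} (s : Finset ι) (c : ι → ℂ) (b : ι → ℝ) (z : ℝ) : ℂ :=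
  ∑ k ∈ s, c k * exp (I * b k * z)

section expSum

variable {ι : Type*} (s : Finset ι) (c : ι → ℂ) (b : ι → ℝ)

theorem norm_expSum_le (z : ℝ) : ‖expSum s c b z‖ ≤ ∑ k ∈ s, ‖c k‖ := by
  refine (norm_sum_le _ _).trans (Finset.sum_le_sum fun k _ => ?_)
  rw [norm_mul, norm_exp]
  simp

theorem expSum_add_sub_mul (b₀ h z : ℝ) :
    expSum s c b (z + h) - exp (I * b₀ * h) * expSum s c b z =
      expSum s (fun k => c k * (exp (I * b k * h) - exp (I * b₀ * h))) b z := by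
  simp only [expSum, Finset.mul_sum, ← Finset.sum_sub_distrib, ofReal_add, mul_add, exp_add]
  exact Finset.sum_congr rfl fun k _ => by ring

theorem expSum_insert_of_eq_zero [DecidableEq ι] {k₀ : ι} (hk₀ : c k₀ = 0) :
    expSum (insert k₀ s) c b = expSum s c b :=
  funext fun _ => Finset.sum_insert_of_eq_zero_if_notMem fun _ => by rw [hk₀, zero_mul]

end expSum

theorem eq_zero_of_tendsto_expSum {ι : Type*} [DecidableEq ι] (s : Finset ι) (c : ι → ℂ)
    {b : ι → ℝ} (hb : Set.InjOn b s) (hc : Tendsto (expSum s c b) atTop (𝓝 0)) :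
    ∀ k ∈ s, c k = 0 := by
  induction s using Finset.induction_on generalizing c with
  | empty => simp
  | @insert k₀ t hk₀ ih =>
    have hbt : ∀ k ∈ t, b k ≠ b k₀ := fun k hk hbk =>
      hk₀ (hb (by simp [hk]) (by simp) hbk ▸ hk)
    obtain ⟨h, hh⟩ := exists_exp_I_mul_ne t b (b k₀) hbt
    have hdiff : Tendsto (expSum t (fun k => c k * (exp (I * b k * h) - exp (I * b k₀ * h))) b)
        atTop (𝓝 0) := by
      have hshift := (hc.comp (tendsto_atTop_add_const_right _ h tendsto_id)).sub
        (hc.const_mul (exp (I * b k₀ * h)))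
      rw [mul_zero, sub_zero] at hshift
      refine hshift.congr fun z => ?_
      rw [Function.comp_apply, id, expSum_add_sub_mul, expSum_insert_of_eq_zero _ _ _ (by simp)]
    have hct : ∀ k ∈ t, c k = 0 := fun k hk =>
      (mul_eq_zero.1 (ih _ (hb.mono (by simp)) hdiff k hk)).resolve_right (sub_ne_zero.2 (hh k hk))
    have hck₀ : c k₀ = 0 := by
      have hnorm (z : ℝ) : ‖expSum (insert k₀ t) c b z‖ = ‖c k₀‖ := by
        rw [expSum, Finset.sum_insert hk₀, Finset.sum_eq_zero fun k hk => by rw [hct k hk, zero_mul],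
          add_zero, norm_mul, norm_exp]
        simp
      have := tendsto_nhds_unique tendsto_const_nhds (hc.norm.congr hnorm)
      simpa using this
    simpa [hck₀] using hct

theorem tendsto_zero_of_limsup_nonpos {α : Type*} {l : Filter α} [l.NeBot] {f : α → ℝ}
    (hf₀ : ∀ x, 0 ≤ f x) (hf : IsBoundedUnder (· ≤ ·) l f) (hlim : limsup f l ≤ 0) :
    Tendsto f l (𝓝 0) :=
  tendsto_of_le_liminf_of_limsup_le (le_liminf_of_le hf.isCoboundedUnder_ge (.of_forall hf₀))
    hlim hf (isBoundedUnder_of ⟨0, hf₀⟩)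

theorem stmt_6_general (m : ℕ) (hm : 1 ≤ m) (b a : Fin m → ℝ)
    (hbd : Function.Injective b) (ha : ∀ k, a k ≠ 0) :
    0 < Filter.limsup
      (fun z : ℝ => ‖∑ k, (a k : ℂ) * Complex.exp (Complex.I * (b k) * z)‖)
      Filter.atTop := by
  by_contra! hlim
  have hbdd : IsBoundedUnder (· ≤ ·) atTop fun z => ‖expSum Finset.univ (fun k => (a k : ℂ)) b z‖ :=
    isBoundedUnder_of ⟨_, norm_expSum_le _ _ _⟩
  have htend := tendsto_zero_iff_norm_tendsto_zero.2
    (tendsto_zero_of_limsup_nonpos (fun _ => norm_nonneg _) hbdd hlim)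
  have ha₀ := eq_zero_of_tendsto_expSum _ _ hbd.injOn htend ⟨0, hm⟩ (Finset.mem_univ _)
  exact ha _ (ofReal_eq_zero.1 ha₀)

/-- A nontrivial trigonometric sum with distinct positive frequencies does not
tend to zero: its limsup at infinity is positive. -/
theorem stmt_6 (m : ℕ) (hm : 1 ≤ m) (b a : Fin m → ℝ)
    (hb : ∀ k, 0 < b k) (hbd : Function.Injective b) (ha : ∀ k, a k ≠ 0) :
    0 < Filter.limsup
      (fun z : ℝ => ‖∑ k, (a k : ℂ) * Complex.exp (Complex.I * (b k) * z)‖)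
      Filter.atTop :=
  stmt_6_general m hm b a hbd ha
end

section
/- Let f : ℝ → ℝ be smooth such that for every s ≥ 0, f^{(s)} is bounded on ℝ. Suppose for some s ≥ 1 there exist δ > 0, C > 0 and a sequence z_n → ∞ such that |f^{(s)}(z)| ≥ C for all z ∈ (z_n, z_n + δ) and all n, and furthermore f^{(s)} does not change sign on each interval (z_n, z_n + δ). Then limsup_{z → ∞} |f^{(s-1)}(z)| ≥ Cδ/3 > 0. -/
private lemma mono_key {C : ℝ} (g : ℝ → ℝ) (hg : Differentiable ℝ g) (a b : ℝ) (hab : a ≤ b)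
    (h : ∀ x ∈ Set.Ioo a b, C ≤ deriv g x) : C * (b - a) ≤ g b - g a := by
  have hmono : MonotoneOn (fun x => g x - C * x) (Set.Icc a b) := by
    apply monotoneOn_of_deriv_nonneg (convex_Icc a b)
      ((hg.continuous.sub (continuous_const.mul continuous_id')).continuousOn)
      ((hg.sub (differentiable_id.const_mul C)).differentiableOn)
    intro x hx
    rw [interior_Icc] at hx
    have hd : HasDerivAt (fun x => g x - C * x) (deriv g x - C) x := by
      have h0 := ((hg x).hasDerivAt.sub ((hasDerivAt_id x).const_mul C)); rw [mul_one] at h0; exact h0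
    rw [show deriv (g - (fun x => C) * fun x => x) x = deriv (fun x => g x - C * x) x from rfl, hd.deriv]
    linarith [h x hx]
  have := hmono (Set.left_mem_Icc.2 hab) (Set.right_mem_Icc.2 hab) hab
  simp only at this
  linarith

/-- Lower bounds on a derivative on recurring intervals force the previous
derivative to be bounded below infinitely often. -/
theorem stmt_7 (f : ℝ → ℝ) (hf : ContDiff ℝ (⊤ : ℕ∞) f)
    (hbd : ∀ s : ℕ, ∃ B : ℝ, ∀ x, |iteratedDeriv s f x| ≤ B)
    (s : ℕ) (hs : 1 ≤ s) (δ C : ℝ) (hδ : 0 < δ) (hC : 0 < C)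
    (z : ℕ → ℝ) (hz : Filter.Tendsto z Filter.atTop Filter.atTop)
    (hlow : ∀ n, ∀ x ∈ Set.Ioo (z n) (z n + δ), C ≤ |iteratedDeriv s f x|)
    (hsign : ∀ n, (∀ x ∈ Set.Ioo (z n) (z n + δ), 0 ≤ iteratedDeriv s f x) ∨
      (∀ x ∈ Set.Ioo (z n) (z n + δ), iteratedDeriv s f x ≤ 0)) :
    C * δ / 3 ≤ Filter.limsup (fun x => |iteratedDeriv (s - 1) f x|) Filter.atTop ∧
      0 < C * δ / 3 := by
  have hpos : 0 < C * δ / 3 := by positivity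
  refine ⟨?_, hpos⟩
  set g : ℝ → ℝ := iteratedDeriv (s - 1) f with hgdef
  have hgdiff : Differentiable ℝ g :=
    hf.differentiable_iteratedDeriv (s - 1) (WithTop.coe_lt_coe.2 (WithTop.coe_lt_top _))
  have hderiv : deriv g = iteratedDeriv s f := by
    rw [hgdef, ← iteratedDeriv_succ, Nat.sub_add_cancel hs]
  -- for each n, there is x > z n with C*δ/3 ≤ |g x|
  have key : ∀ n, ∃ x, z n < x ∧ C * δ / 3 ≤ |g x| := by
    intro n
    set a := z n + δ / 6 with ha
    set b := z n + 5 * δ / 6 with hb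
    have hab : a ≤ b := by rw [ha, hb]; linarith
    have hsub : Set.Ioo a b ⊆ Set.Ioo (z n) (z n + δ) :=
      Set.Ioo_subset_Ioo (by rw [ha]; linarith) (by rw [hb]; linarith)
    have hdiff : C * (2 * δ / 3) ≤ |g b - g a| := by
      have hba : b - a = 2 * δ / 3 := by rw [ha, hb]; ring
      rcases hsign n with hp | hm
      · have : C * (b - a) ≤ g b - g a := by
          apply mono_key g hgdiff a b hab
          intro x hx
          rw [hderiv]
          have h1 := hlow n x (hsub hx)
          have h2 := hp x (hsub hx)
          rwa [abs_of_nonneg h2] at h1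
        rw [← hba]
        exact this.trans (le_abs_self _)
      · have : C * (b - a) ≤ (-g) b - (-g) a := by
          apply mono_key (-g) hgdiff.neg a b hab
          intro x hx
          rw [show (-g : ℝ → ℝ) = fun y => -g y from rfl, deriv.fun_neg, hderiv]
          have h1 := hlow n x (hsub hx)
          have h2 := hm x (hsub hx)
          rw [abs_of_nonpos h2] at h1
          simpa using h1
        rw [← hba]
        simp only [Pi.neg_apply] at this
        calc C * (b - a) ≤ -(g b - g a) := by linarith
          _ ≤ |g b - g a| := neg_le_abs _
    have habs : C * δ / 3 ≤ |g a| ∨ C * δ / 3 ≤ |g b| := by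
      by_contra h
      push_neg at h
      have := abs_sub (g b) (g a)
      have h3 : |g b - g a| ≤ |g b| + |g a| := abs_sub _ _
      nlinarith [h.1, h.2]
    rcases habs with h | h
    · exact ⟨a, by rw [ha]; linarith, h⟩
    · exact ⟨b, by rw [hb]; linarith, h⟩
  -- frequently
  have hfreq : ∃ᶠ x in Filter.atTop, C * δ / 3 ≤ |g x| := by
    rw [Filter.frequently_atTop]
    intro N
    obtain ⟨n, hn⟩ := (hz.eventually_ge_atTop N).exists
    obtain ⟨x, hx1, hx2⟩ := key n
    exact ⟨x, le_of_lt (lt_of_le_of_lt hn hx1), hx2⟩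
  obtain ⟨B, hB⟩ := hbd (s - 1)
  exact Filter.le_limsup_of_frequently_le hfreq
    ⟨B, Filter.eventually_map.2 (Filter.Eventually.of_forall hB)⟩
end

section
/- Let n ≥ 1, let Ω ⊆ ℂ be open, and let λ_1, ..., λ_n : Ω → ℂ and f : Ω → ℂ. Suppose γ : [0, ∞) → Ω is a curve with limit z* ∈ Ω such that: (i) each λ_j is analytic and nonvanishing near z*; (ii) the products ∏_{j' ≠ j} λ_{j'}, j = 1, ..., n, are linearly independent; (iii) f(γ(t)) → +∞ and for every polynomial rate s, |γ(t) - z*|^s · e^{c f(γ(t))} → ∞ for each c > 0. If a_1, ..., a_n ∈ ℝ satisfy ∑_{j=1}^n a_j / (1 + λ_j(z) e^{w f(z)}) ≡ 0 on Ω for some w > 0, and the common denominator expansion gives numerator [∑_j a_j ∏_{j'≠j} λ_{j'}(z)] e^{(n-1)w f(z)} + lower-order terms, then in fact ∑_j a_j ∏_{j'≠j} λ_{j'} ≡ 0 near z*, and hence a_1 = ... = a_n = 0. -/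
/-!
Write `E = exp (w f)` and `ε = 1 / E`. Since `1 + λⱼ E = (ε + λⱼ) E`, the hypothesis says
`∑ⱼ aⱼ / (ε + λⱼ) = 0`, and clearing denominators makes the polynomial
`Φ(λ, ε) = ∑ⱼ aⱼ ∏_{j' ≠ j} (ε + λ_{j'})` vanish along `γ`. As `ε → 0` along `γ` and `Φ` is
smooth, `G = Φ(λ, 0)` is `O(ε)` there. If the analytic function `G` did not vanish near `z*`, it
would vanish there to some finite order `k`, so `|γ - z*|^k = O(exp (-w Re f(γ)))`, contradicting
the growth hypothesis. Linear independence of the products then forces `a = 0`.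
-/

open Filter Topology Asymptotics

theorem Finset.sum_mul_prod_erase_eq_zero_of_sum_div_eq_zero {K ι : Type*} [Field K]
    [Fintype ι] [DecidableEq ι] {a u : ι → K} (hu : ∀ j, u j ≠ 0) (h : ∑ j, a j / u j = 0) :
    ∑ j, a j * ∏ j' ∈ univ.erase j, u j' = 0 := by
  calc ∑ j, a j * ∏ j' ∈ univ.erase j, u j' = (∑ j, a j / u j) * ∏ j, u j := by
        rw [sum_mul]
        refine sum_congr rfl fun j _ => ?_
        rw [← mul_prod_erase _ u (mem_univ j), ← mul_assoc, div_mul_cancel₀ _ (hu j)]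
    _ = 0 := by rw [h, zero_mul]

theorem ContDiffAt.isBigO_sub_apply_zero {α 𝕜 E G F : Type*} [RCLike 𝕜]
    [NormedAddCommGroup E] [NormedSpace 𝕜 E] [NormedAddCommGroup G] [NormedSpace 𝕜 G]
    [NormedAddCommGroup F] [NormedSpace 𝕜 F] {Φ : E × G → F} {p : E}
    (hΦ : ContDiffAt 𝕜 1 Φ (p, 0)) {l : Filter α} {x : α → E} {ε : α → G}
    (hx : Tendsto x l (𝓝 p)) (hε : Tendsto ε l (𝓝 0)) :
    (fun t => Φ (x t, ε t) - Φ (x t, 0)) =O[l] ε := by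
  obtain ⟨K, s, hs, hK⟩ := hΦ.exists_lipschitzOnWith
  refine IsBigO.of_bound K ?_
  filter_upwards [hx.prodMk_nhds hε hs, hx.prodMk_nhds tendsto_const_nhds hs] with t h₁ h₂
  simpa using hK.norm_sub_le h₁ h₂

theorem AnalyticAt.exists_pow_sub_isBigO {𝕜 E : Type*} [NontriviallyNormedField 𝕜]
    [NormedAddCommGroup E] [NormedSpace 𝕜 E] {f : 𝕜 → E} {z₀ : 𝕜} (hf : AnalyticAt 𝕜 f z₀)
    (h : ¬∀ᶠ z in 𝓝 z₀, f z = 0) : ∃ k : ℕ, (fun z => (z - z₀) ^ k) =O[𝓝 z₀] f := by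
  obtain ⟨k, g, hg, hg₀, hfg⟩ := hf.exists_eventuallyEq_pow_smul_nonzero_iff.mpr h
  have hpos : 0 < ‖g z₀‖ := norm_pos_iff.mpr hg₀
  have hglow : ∀ᶠ z in 𝓝 z₀, ‖g z₀‖ / 2 < ‖g z‖ :=
    hg.continuousAt.norm.eventually (lt_mem_nhds (half_lt_self hpos))
  refine ⟨k, IsBigO.of_bound (2 / ‖g z₀‖) ?_⟩
  filter_upwards [hfg, hglow] with z hz hgz
  have hg_ratio : 1 ≤ 2 / ‖g z₀‖ * ‖g z‖ := by
    rw [div_mul_eq_mul_div, le_div_iff₀ hpos]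
    linarith
  calc ‖(z - z₀) ^ k‖ ≤ ‖(z - z₀) ^ k‖ * (2 / ‖g z₀‖ * ‖g z‖) :=
        le_mul_of_one_le_right (norm_nonneg _) hg_ratio
    _ = 2 / ‖g z₀‖ * ‖f z‖ := by rw [hz, norm_smul]; ring

theorem Asymptotics.not_isBigO_of_tendsto_div_atTop {α E F : Type*} [Norm E]
    [NormedAddCommGroup F] {l : Filter α} [l.NeBot] {f : α → E} {g : α → F}
    (hg : ∀ᶠ t in l, g t ≠ 0) (h : Tendsto (fun t => ‖f t‖ / ‖g t‖) l atTop) : ¬f =O[l] g := by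
  rw [isBigO_iff_isBoundedUnder_le_div hg]
  exact not_isBoundedUnder_of_tendsto_atTop h

section ClearedNumerator

variable {ι 𝕜 : Type*} [Fintype ι] [DecidableEq ι] [RCLike 𝕜]

def clearedNumerator (a : ι → 𝕜) (p : (ι → 𝕜) × 𝕜) : 𝕜 :=
  ∑ j, a j * ∏ j' ∈ Finset.univ.erase j, (p.2 + p.1 j')

theorem isBigO_sum_mul_prod_erase_of_sum_div_eq_zero {α : Type*} {l : Filter α} (a : ι → 𝕜)
    {μ : α → ι → 𝕜} {μ₀ : ι → 𝕜} {ε : α → 𝕜} (hμ : Tendsto μ l (𝓝 μ₀))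
    (hμ₀ : ∀ j, μ₀ j ≠ 0) (hε : Tendsto ε l (𝓝 0))
    (h : ∀ᶠ t in l, ∑ j, a j / (ε t + μ t j) = 0) :
    (fun t => ∑ j, a j * ∏ j' ∈ Finset.univ.erase j, μ t j') =O[l] ε := by
  have hne : ∀ᶠ t in l, ∀ j, ε t + μ t j ≠ 0 := eventually_all.2 fun j =>
    (hε.add (tendsto_pi_nhds.1 hμ j)).eventually_ne (by simpa using hμ₀ j)
  have hsmooth : ContDiffAt 𝕜 1 (clearedNumerator a) (μ₀, 0) := by
    unfold clearedNumerator
    fun_prop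
  refine (hsmooth.isBigO_sub_apply_zero hμ hε).neg_left.congr' ?_ EventuallyEq.rfl
  filter_upwards [h, hne] with t ht htne
  simp [clearedNumerator, Finset.sum_mul_prod_erase_eq_zero_of_sum_div_eq_zero htne ht]

end ClearedNumerator

theorem sum_div_one_add_mul_exp {ι : Type*} [Fintype ι] (a μ : ι → ℂ) (z : ℂ) :
    ∑ j, a j / (1 + μ j * Complex.exp z) =
      (∑ j, a j / (Complex.exp (-z) + μ j)) / Complex.exp z := by
  rw [Finset.sum_div]
  refine Finset.sum_congr rfl fun j _ => ?_
  rw [div_div, add_mul, ← Complex.exp_add, neg_add_cancel, Complex.exp_zero]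

theorem stmt_14_general (n : ℕ) (Ω : Set ℂ)
    (lam : Fin n → ℂ → ℂ) (f : ℂ → ℂ)
    (γ : ℝ → ℂ) (zs : ℂ)
    (hγΩ : ∀ t, γ t ∈ Ω)
    (hγlim : Tendsto γ atTop (nhds zs))
    (hanal : ∀ j, ∃ U ∈ nhds zs, AnalyticOn ℂ (lam j) U ∧ ∀ z ∈ U, lam j z ≠ 0)
    (hli : ∀ c : Fin n → ℂ,
      (∀ᶠ z in nhds zs, ∑ j, c j * ∏ j' ∈ Finset.univ.erase j, lam j' z = 0) →
      c = 0)
    (hfdiv : Tendsto (fun t => (f (γ t)).re) atTop atTop)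
    (hdom : ∀ s : ℕ, ∀ c > (0:ℝ),
      Tendsto (fun t => ‖γ t - zs‖ ^ s * Real.exp (c * (f (γ t)).re)) atTop atTop)
    (a : Fin n → ℝ) (w : ℝ) (hw : 0 < w)
    (hzero : ∀ z ∈ Ω,
      ∑ j, (a j : ℂ) / (1 + lam j z * Complex.exp (w * f z)) = 0) :
    (∀ᶠ z in nhds zs,
      ∑ j, (a j : ℂ) * ∏ j' ∈ Finset.univ.erase j, lam j' z = 0) ∧ a = 0 := by
  have hlam : ∀ j, AnalyticAt ℂ (lam j) zs ∧ lam j zs ≠ 0 := fun j => by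
    obtain ⟨U, hU, hA, hne⟩ := hanal j
    exact ⟨hA.analyticAt hU, hne zs (mem_of_mem_nhds hU)⟩
  have hε : Tendsto (fun t => Complex.exp (-(w * f (γ t)))) atTop (𝓝 0) :=
    Complex.tendsto_exp_nhds_zero_iff.2 (by simpa using hfdiv.const_mul_atTop hw)
  have hGε := isBigO_sum_mul_prod_erase_of_sum_div_eq_zero (fun j => (a j : ℂ))
    (tendsto_pi_nhds.2 fun j => (hlam j).1.continuousAt.tendsto.comp hγlim)
    (fun j => (hlam j).2) hε <| Eventually.of_forall fun t => by
      simpa [sum_div_one_add_mul_exp] using hzero (γ t) (hγΩ t)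
  have key : ∀ᶠ z in 𝓝 zs, ∑ j, (a j : ℂ) * ∏ j' ∈ Finset.univ.erase j, lam j' z = 0 := by
    by_contra hG
    have hGan : AnalyticAt ℂ
        (fun z => ∑ j, (a j : ℂ) * ∏ j' ∈ Finset.univ.erase j, lam j' z) zs := by
      have hlam_an : ∀ j, AnalyticAt ℂ (lam j) zs := fun j => (hlam j).1
      fun_prop
    obtain ⟨k, hk⟩ := hGan.exists_pow_sub_isBigO hG
    refine not_isBigO_of_tendsto_div_atTop (.of_forall fun t => Complex.exp_ne_zero _) ?_
      ((hk.comp_tendsto hγlim).trans hGε)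
    simpa [Complex.norm_exp, Real.exp_neg] using hdom k w hw
  exact ⟨key, funext fun j => by simpa using congrFun (hli (fun j => (a j : ℂ)) key) j⟩

/-- Key mechanism for three-layer sigmoid neurons: a vanishing sum of sigmoid-type
terms forces the numerator coefficient function to vanish, hence all coefficients
are zero. -/
theorem stmt_14 (n : ℕ) (hn : 1 ≤ n) (Ω : Set ℂ) (hΩ : IsOpen Ω)
    (lam : Fin n → ℂ → ℂ) (f : ℂ → ℂ)
    (γ : ℝ → ℂ) (zs : ℂ) (hzs : zs ∈ Ω)
    (hγΩ : ∀ t, γ t ∈ Ω)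
    (hγlim : Tendsto γ atTop (nhds zs))
    (hanal : ∀ j, ∃ U ∈ nhds zs, AnalyticOn ℂ (lam j) U ∧ ∀ z ∈ U, lam j z ≠ 0)
    (hli : ∀ c : Fin n → ℂ,
      (∀ᶠ z in nhds zs, ∑ j, c j * ∏ j' ∈ Finset.univ.erase j, lam j' z = 0) →
      c = 0)
    (hfdiv : Tendsto (fun t => (f (γ t)).re) atTop atTop)
    (hdom : ∀ s : ℕ, ∀ c > (0:ℝ),
      Tendsto (fun t => ‖γ t - zs‖ ^ s * Real.exp (c * (f (γ t)).re)) atTop atTop)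
    (a : Fin n → ℝ) (w : ℝ) (hw : 0 < w)
    (hzero : ∀ z ∈ Ω,
      ∑ j, (a j : ℂ) / (1 + lam j z * Complex.exp (w * f z)) = 0) :
    (∀ᶠ z in nhds zs,
      ∑ j, (a j : ℂ) * ∏ j' ∈ Finset.univ.erase j, lam j' z = 0) ∧ a = 0 :=
  stmt_14_general n Ω lam f γ zs hγΩ hγlim hanal hli hfdiv hdom a w hw hzero
end
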